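/- Let $n \ge 1$ and let $u_0 \in L^1(\mathbb{R}^n)$ with $\int_{\mathbb{R}^n} u_0\,dx = M$. Define $u(\cdot,t) = G_t * u_0$ for $t>0$, where $G_t(x) = (4\pi t)^{-n/2} e^{-|x|^2/(4t)}$ is the Gaussian heat kernel. Then $\|u(\cdot,t) - M G_t\|_{L^1(\mathbb{R}^n)} \to 0$ as $t \to \infty$. -/

import Mathlib

open Real MeasureTheory Filter

/-- The Gaussian heat kernel on `ℝⁿ`: `G t x = (4πt)^(-n/2) exp(-‖x‖²/(4t))`. -/
noncomputable def heatKernel (n : ℕ) (t : ℝ) (x : EuclideanSpace ℝ (Fin n)) : ℝ :=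
  (4 * π * t) ^ (-(n : ℝ) / 2) * Real.exp (-‖x‖ ^ 2 / (4 * t))

/-- The solution of the heat equation with initial data `u0`, `u(·,t) = G_t * u0`. -/
noncomputable def heatSol (n : ℕ) (u0 : EuclideanSpace ℝ (Fin n) → ℝ) (t : ℝ)
    (x : EuclideanSpace ℝ (Fin n)) : ℝ :=
  ∫ y, heatKernel n t (x - y) * u0 y

open scoped Topology

/-!
Since `G_t` has mass one, `u(t) - M G_t = ∫ (G_t(· - y) - G_t) u₀(y) dy`, and integrating in `x`
first (Tonelli) gives `‖u(t) - M G_t‖₁ ≤ ∫ ‖G_t(· - y) - G_t‖₁ |u₀(y)| dy`. Parabolic scaling turns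
`‖G_t(· - y) - G_t‖₁` into `‖G_1(· - y/√t) - G_1‖₁`, which is at most `2` and tends to `0` as
`t → ∞` by continuity of translation in `L¹` (for the Gaussian, dominated convergence with a
Gaussian majorant). Dominated convergence in `y` concludes.
-/

noncomputable def translationL1Dist {E : Type*} [Sub E] [MeasurableSpace E] (μ : Measure E)
    (G : E → ℝ) (y : E) : ℝ :=
  ∫ x, |G (x - y) - G x| ∂μ

section TranslationL1Dist

variable {E : Type*} [AddGroup E] [MeasurableSpace E] {μ : Measure E} {G u : E → ℝ}

theorem translationL1Dist_nonneg (y : E) : 0 ≤ translationL1Dist μ G y :=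
  integral_nonneg fun _ => abs_nonneg _

theorem translationL1Dist_le [MeasurableAdd E] [μ.IsAddRightInvariant] (hG : Integrable G μ)
    (y : E) : translationL1Dist μ G y ≤ 2 * ∫ x, |G x| ∂μ :=
  calc translationL1Dist μ G y ≤ ∫ x, (|G (x - y)| + |G x|) ∂μ :=
        integral_mono_of_nonneg (.of_forall fun _ => abs_nonneg _)
          ((hG.comp_sub_right y).abs.add hG.abs) (.of_forall fun _ => abs_sub _ _)
    _ = 2 * ∫ x, |G x| ∂μ := by
        rw [integral_add (hG.comp_sub_right y).abs hG.abs,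
          integral_sub_right_eq_self (fun x => |G x|) y]
        ring

variable [MeasurableAdd₂ E] [MeasurableNeg E] [SFinite μ] [μ.IsAddRightInvariant]

theorem integrable_prod_translate_sub_mul (hG : Integrable G μ) (hu : Integrable u μ) :
    Integrable (fun p : E × E => (G (p.1 - p.2) - G p.1) * u p.2) (μ.prod μ) :=
  ((hu.convolution_integrand (ContinuousLinearMap.mul ℝ ℝ) hG).sub (hG.mul_prod hu)).congr
    (.of_forall fun p => by simp only [ContinuousLinearMap.mul_apply', Pi.sub_apply]; ring)

theorem integrable_translationL1Dist_mul (hG : Integrable G μ) (hu : Integrable u μ) :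
    Integrable (fun y => translationL1Dist μ G y * |u y|) μ :=
  (integrable_prod_translate_sub_mul hG hu).integral_norm_prod_right.congr
    (.of_forall fun y => by
      simp only [Real.norm_eq_abs, abs_mul, translationL1Dist, integral_mul_const])

theorem integral_abs_conv_sub_integral_mul_le (hG : Integrable G μ) (hu : Integrable u μ) :
    ∫ x, |∫ y, G (x - y) * u y ∂μ - (∫ y, u y ∂μ) * G x| ∂μ
      ≤ ∫ y, translationL1Dist μ G y * |u y| ∂μ := by
  set K := fun p : E × E => (G (p.1 - p.2) - G p.1) * u p.2
  have hK : Integrable K (μ.prod μ) := integrable_prod_translate_sub_mul hG hu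
  have hconv : ∀ᵐ x ∂μ, Integrable (fun y => G (x - y) * u y) μ :=
    (hu.convolution_integrand (ContinuousLinearMap.mul ℝ ℝ) hG).prod_right_ae.mono
      fun x hx => by simpa only [ContinuousLinearMap.mul_apply', mul_comm] using hx
  have hpointwise : ∀ᵐ x ∂μ,
      |∫ y, G (x - y) * u y ∂μ - (∫ y, u y ∂μ) * G x| ≤ ∫ y, ‖K (x, y)‖ ∂μ := by
    filter_upwards [hconv] with x hx
    have hK_slice : ∫ y, K (x, y) ∂μ = ∫ y, G (x - y) * u y ∂μ - (∫ y, u y ∂μ) * G x := by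
      simp only [K, sub_mul]
      rw [integral_sub hx (hu.const_mul (G x)), integral_const_mul, mul_comm]
    rw [← hK_slice, ← Real.norm_eq_abs]
    exact norm_integral_le_integral_norm _
  calc ∫ x, |∫ y, G (x - y) * u y ∂μ - (∫ y, u y ∂μ) * G x| ∂μ
      ≤ ∫ x, ∫ y, ‖K (x, y)‖ ∂μ ∂μ :=
        integral_mono_of_nonneg (.of_forall fun _ => abs_nonneg _)
          hK.integral_norm_prod_left hpointwise
    _ = ∫ y, ∫ x, ‖K (x, y)‖ ∂μ ∂μ := integral_integral_swap hK.norm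
    _ = ∫ y, translationL1Dist μ G y * |u y| ∂μ := by
        simp only [K, Real.norm_eq_abs, abs_mul, translationL1Dist, integral_mul_const]

end TranslationL1Dist

section HeatKernel

variable (n : ℕ)

theorem heatKernel_nonneg {t : ℝ} (ht : 0 ≤ t) (x : EuclideanSpace ℝ (Fin n)) :
    0 ≤ heatKernel n t x :=
  mul_nonneg (rpow_nonneg (by positivity) _) (exp_nonneg _)

@[fun_prop]
theorem continuous_heatKernel (t : ℝ) : Continuous (heatKernel n t) := by
  unfold heatKernel
  fun_prop

theorem heatKernel_eq_mul_exp_neg_mul_sq_norm (t : ℝ) (x : EuclideanSpace ℝ (Fin n)) :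
    heatKernel n t x = (4 * π * t) ^ (-(n : ℝ) / 2) * rexp (-(1 / (4 * t)) * ‖x‖ ^ 2) := by
  rw [heatKernel]
  congr 2
  ring

theorem integrable_heatKernel {t : ℝ} (ht : 0 < t) : Integrable (heatKernel n t) := by
  have hgauss := (GaussianFourier.integrable_cexp_neg_mul_sq_norm_add
    (V := EuclideanSpace ℝ (Fin n)) (b := ((1 / (4 * t) : ℝ) : ℂ)) (by simpa using ht) 0 0).norm
  refine (hgauss.const_mul ((4 * π * t) ^ (-(n : ℝ) / 2))).congr (.of_forall fun x => ?_)
  simp [heatKernel_eq_mul_exp_neg_mul_sq_norm, ← Complex.ofReal_pow, Complex.norm_exp]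

theorem integral_heatKernel {t : ℝ} (ht : 0 < t) :
    ∫ x, heatKernel n t x = 1 := by
  simp only [heatKernel_eq_mul_exp_neg_mul_sq_norm]
  have hscale : π / (1 / (4 * t)) = 4 * π * t := by field_simp
  rw [integral_const_mul, GaussianFourier.integral_rexp_neg_mul_sq_norm (by positivity),
    finrank_euclideanSpace_fin, hscale, ← rpow_add (by positivity), neg_div, neg_add_cancel,
    rpow_zero]

theorem heatKernel_sqrt_smul {t : ℝ} (ht : 0 < t) (z : EuclideanSpace ℝ (Fin n)) :
    heatKernel n t (√t • z) = t ^ (-(n : ℝ) / 2) * heatKernel n 1 z := by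
  have hexp : -‖√t • z‖ ^ 2 / (4 * t) = -‖z‖ ^ 2 / (4 * 1) := by
    rw [norm_smul, norm_of_nonneg (sqrt_nonneg t), mul_pow, sq_sqrt ht.le]
    field_simp
  simp only [heatKernel, hexp, mul_one]
  rw [mul_comm (4 * π) t, mul_rpow ht.le (by positivity), mul_assoc]

theorem translationL1Dist_heatKernel_le_two {t : ℝ} (ht : 0 < t)
    (y : EuclideanSpace ℝ (Fin n)) :
    translationL1Dist volume (heatKernel n t) y ≤ 2 := by
  have habs : (fun x => |heatKernel n t x|) = heatKernel n t :=
    funext fun x => abs_of_nonneg (heatKernel_nonneg n ht.le x)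
  simpa [habs, integral_heatKernel n ht] using translationL1Dist_le (integrable_heatKernel n ht) y

theorem translationL1Dist_heatKernel_rescale {t : ℝ} (ht : 0 < t) (y : EuclideanSpace ℝ (Fin n)) :
    translationL1Dist volume (heatKernel n t) y
      = translationL1Dist volume (heatKernel n 1) ((√t)⁻¹ • y) := by
  have hsqrt : 0 < √t := sqrt_pos.2 ht
  have hintegrand : ∀ z : EuclideanSpace ℝ (Fin n),
      |heatKernel n t (√t • z - y) - heatKernel n t (√t • z)|
        = t ^ (-(n : ℝ) / 2) * |heatKernel n 1 (z - (√t)⁻¹ • y) - heatKernel n 1 z| := by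
    intro z
    rw [← smul_inv_smul₀ hsqrt.ne' y, ← smul_sub, inv_smul_smul₀ hsqrt.ne',
      heatKernel_sqrt_smul n ht, heatKernel_sqrt_smul n ht, ← mul_sub, abs_mul,
      abs_of_nonneg (rpow_nonneg ht.le _)]
  have hjacobian : |(√t ^ Module.finrank ℝ (EuclideanSpace ℝ (Fin n)))⁻¹| = t ^ (-(n : ℝ) / 2) := by
    rw [finrank_euclideanSpace_fin, abs_of_nonneg (by positivity), ← rpow_natCast, sqrt_eq_rpow,
      ← rpow_mul ht.le, ← rpow_neg ht.le]
    ring_nf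
  have hsubst := Measure.integral_comp_smul volume
    (fun x => |heatKernel n t (x - y) - heatKernel n t x|) √t
  simp only [hintegrand, integral_const_mul, hjacobian, smul_eq_mul] at hsubst
  exact (mul_left_cancel₀ (by positivity) hsubst).symm

theorem heatKernel_one_sub_le_heatKernel_two {a : EuclideanSpace ℝ (Fin n)} (ha : ‖a‖ ≤ 1)
    (z : EuclideanSpace ℝ (Fin n)) :
    heatKernel n 1 (z - a) ≤ rexp (1 / 4) * 2 ^ ((n : ℝ) / 2) * heatKernel n 2 z := by
  have hconst : (2 : ℝ) ^ ((n : ℝ) / 2) * (4 * π * 2) ^ (-(n : ℝ) / 2)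
      = (4 * π * 1) ^ (-(n : ℝ) / 2) := by
    rw [show 4 * π * 2 = 2 * (4 * π * 1) by ring, mul_rpow (by norm_num) (by positivity),
      ← mul_assoc, ← rpow_add two_pos, neg_div, add_neg_cancel, rpow_zero, one_mul]
  -- `‖z‖² ≤ 2‖z - a‖² + 2` since `‖z‖ ≤ ‖z - a‖ + 1`
  have hexp : rexp (-‖z - a‖ ^ 2 / (4 * 1)) ≤ rexp (1 / 4) * rexp (-‖z‖ ^ 2 / (4 * 2)) := by
    rw [← exp_add, exp_le_exp]
    have hz : ‖z‖ ≤ ‖z - a‖ + 1 := (norm_le_norm_sub_add z a).trans (by linarith)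
    nlinarith [sq_nonneg (‖z - a‖ - 1), norm_nonneg z]
  calc heatKernel n 1 (z - a) = (4 * π * 1) ^ (-(n : ℝ) / 2) * rexp (-‖z - a‖ ^ 2 / (4 * 1)) := rfl
    _ ≤ (4 * π * 1) ^ (-(n : ℝ) / 2) * (rexp (1 / 4) * rexp (-‖z‖ ^ 2 / (4 * 2))) := by gcongr
    _ = rexp (1 / 4) * 2 ^ ((n : ℝ) / 2) * heatKernel n 2 z := by
      rw [heatKernel, ← hconst]
      ring

theorem tendsto_translationL1Dist_heatKernel_one :
    Tendsto (translationL1Dist volume (heatKernel n 1)) (𝓝 0) (𝓝 0) := by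
  have hdom : ∀ a : EuclideanSpace ℝ (Fin n), ‖a‖ ≤ 1 → ∀ z,
      |heatKernel n 1 (z - a) - heatKernel n 1 z|
        ≤ 2 * (rexp (1 / 4) * 2 ^ ((n : ℝ) / 2) * heatKernel n 2 z) := by
    intro a ha z
    calc |heatKernel n 1 (z - a) - heatKernel n 1 z|
        ≤ |heatKernel n 1 (z - a)| + |heatKernel n 1 (z - 0)| := by
          rw [sub_zero]
          exact abs_sub _ _
      _ = heatKernel n 1 (z - a) + heatKernel n 1 (z - 0) := by
          rw [abs_of_nonneg (heatKernel_nonneg n zero_le_one _),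
            abs_of_nonneg (heatKernel_nonneg n zero_le_one _)]
      _ ≤ _ := by
          rw [two_mul]
          exact add_le_add (heatKernel_one_sub_le_heatKernel_two n ha z)
            (heatKernel_one_sub_le_heatKernel_two n (by simp) z)
  have hlim := tendsto_integral_filter_of_dominated_convergence (μ := volume) (l := 𝓝 0)
    (F := fun a z => |heatKernel n 1 (z - a) - heatKernel n 1 z|) (f := fun _ => 0)
    (fun z => 2 * (rexp (1 / 4) * 2 ^ ((n : ℝ) / 2) * heatKernel n 2 z))
    (.of_forall fun a => (by fun_prop : Continuous _).aestronglyMeasurable)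
    (by
      filter_upwards [Metric.closedBall_mem_nhds (0 : EuclideanSpace ℝ (Fin n)) one_pos] with a ha
      exact .of_forall fun z => by
        simpa using hdom a (by simpa using ha) z)
    (((integrable_heatKernel n two_pos).const_mul _).const_mul 2)
    (.of_forall fun z => by
      have hcont : Continuous fun a => |heatKernel n 1 (z - a) - heatKernel n 1 z| := by fun_prop
      simpa using hcont.tendsto 0)
  rw [integral_zero] at hlim
  exact hlim

theorem tendsto_translationL1Dist_heatKernel_atTop (y : EuclideanSpace ℝ (Fin n)) :
    Tendsto (fun t => translationL1Dist volume (heatKernel n t) y) atTop (𝓝 0) := by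
  have hshrink : Tendsto (fun t : ℝ => (√t)⁻¹ • y) atTop (𝓝 0) := by
    simpa using (tendsto_inv_atTop_zero.comp tendsto_sqrt_atTop).smul_const y
  refine ((tendsto_translationL1Dist_heatKernel_one n).comp hshrink).congr' ?_
  filter_upwards [eventually_gt_atTop 0] with t ht
  exact (translationL1Dist_heatKernel_rescale n ht y).symm

theorem tendsto_integral_translationL1Dist_heatKernel_mul {u : EuclideanSpace ℝ (Fin n) → ℝ}
    (hu : Integrable u) :
    Tendsto (fun t => ∫ y, translationL1Dist volume (heatKernel n t) y * |u y|) atTop (𝓝 0) := by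
  have hlim := tendsto_integral_filter_of_dominated_convergence (fun y => 2 * |u y|)
    (by
      filter_upwards [eventually_gt_atTop 0] with t ht
      exact (integrable_translationL1Dist_mul (integrable_heatKernel n ht) hu).1)
    (by
      filter_upwards [eventually_gt_atTop 0] with t ht
      refine .of_forall fun y => ?_
      rw [norm_mul, norm_of_nonneg (translationL1Dist_nonneg _), Real.norm_eq_abs, abs_abs]
      exact mul_le_mul_of_nonneg_right (translationL1Dist_heatKernel_le_two n ht y) (abs_nonneg _))
    (hu.abs.const_mul 2)
    (.of_forall fun y => (tendsto_translationL1Dist_heatKernel_atTop n y).mul_const |u y|)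
  simpa using hlim

end HeatKernel

theorem heat_L1_convergence_to_gaussian_general (n : ℕ)
    (u0 : EuclideanSpace ℝ (Fin n) → ℝ) (hu0 : Integrable u0) (M : ℝ)
    (hM : ∫ x, u0 x = M) :
    Tendsto (fun t : ℝ =>
        ∫ x, |heatSol n u0 t x - M * heatKernel n t x|) atTop (nhds 0) := by
  subst hM
  refine squeeze_zero' (.of_forall fun t => integral_nonneg fun x => abs_nonneg _) ?_
    (tendsto_integral_translationL1Dist_heatKernel_mul n hu0)
  filter_upwards [eventually_gt_atTop 0] with t ht
  exact integral_abs_conv_sub_integral_mul_le (integrable_heatKernel n ht) hu0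

/-- For integrable initial data with mass `M`, the solution of the heat equation on `ℝⁿ`
converges to `M G_t` in `L¹(ℝⁿ)` as `t → ∞`. -/
theorem heat_L1_convergence_to_gaussian (n : ℕ) (hn : 1 ≤ n)
    (u0 : EuclideanSpace ℝ (Fin n) → ℝ) (hu0 : Integrable u0) (M : ℝ)
    (hM : ∫ x, u0 x = M) :
    Tendsto (fun t : ℝ =>
        ∫ x, |heatSol n u0 t x - M * heatKernel n t x|) atTop (nhds 0) :=
  heat_L1_convergence_to_gaussian_general n u0 hu0 M hM
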